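/- arXiv:2407.14989 — 6 statements merged into one kernel-verified Lean document; each statement's English description precedes it below -/
import Mathlib

section
/- Let d ∈ ℕ, Δt > 0, and L₀, L₁ > 0. Let f : ℝ^d → ℝ^d be continuously differentiable with sup_x ‖f(x)‖ ≤ L₀ and sup_x ‖Df(x)‖_op ≤ L₁. Then the increment map ι := Υ(f, Δt, ·) satisfies sup_{x∈ℝ^d} ‖ι(x)‖ ≤ Δt·L₀ and sup_{x∈ℝ^d} ‖Dι(x)‖_op ≤ exp(L₁·Δt) − 1. -/
/-!
The bound on `‖ι x‖` is the mean value inequality along the trajectory. The increments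
`U x t - x` and `U y t - y` solve `u̇ = f (u + x)` up to an error `L₁ ‖y - x‖`, so by Grönwall `ι`
is Lipschitz with constant `exp (L₁ Δt) - 1`, which bounds `‖Dι‖`.

For differentiability, `U y t - U x t` is compared, again by Grönwall, with `Φ t (y - x)`, where
`Φ` is the fundamental solution of the variational equation `Φ̇ = Df (U x t) ∘ Φ`, `Φ 0 = id`.
Picard–Lindelöf produces `Φ` only on intervals with `L₁ τ ≤ 1/2`; the semigroup property
`U (U x s) t = U x (s + t)` writes the time-`Δt` map as an iterate of such short-time maps.
-/

open Set Real Metric Asymptotics Filter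
open scoped NNReal

theorem gronwallBound_zero_mul_self (K a x : ℝ) :
    gronwallBound 0 K (K * a) x = a * (exp (K * x) - 1) := by
  by_cases hK : K = 0
  · simp [gronwallBound_K0, hK]
  · rw [gronwallBound_of_K_ne_0 hK]
    field_simp
    ring

theorem gronwallBound_zero_eq_mul (K ε x : ℝ) :
    gronwallBound 0 K ε x = ε * gronwallBound 0 K 1 x := by
  by_cases hK : K = 0
  · simp [gronwallBound_K0, hK]
  · simp only [gronwallBound_of_K_ne_0 hK]
    ring

theorem IsCompact.exists_forall_norm_sub_sub_fderiv_le {E F : Type*} [NormedAddCommGroup E]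
    [NormedSpace ℝ E] [ProperSpace E] [NormedAddCommGroup F] [NormedSpace ℝ F] {f : E → F}
    (hf : ContDiff ℝ 1 f) {K : Set E} (hK : IsCompact K) {ε : ℝ} (hε : 0 < ε) :
    ∃ δ > 0, ∀ b ∈ K, ∀ a, ‖a - b‖ ≤ δ → ‖f a - f b - fderiv ℝ f b (a - b)‖ ≤ ε * ‖a - b‖ := by
  obtain ⟨δ₀, hδ₀, hδ₀f⟩ := Metric.uniformContinuousOn_iff.1
    (hK.cthickening.uniformContinuousOn_of_continuous
      (hf.continuous_fderiv one_ne_zero).continuousOn) ε hε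
  refine ⟨min (δ₀ / 2) 1, by positivity, fun b hb a hab => ?_⟩
  have hball : closedBall b (min (δ₀ / 2) 1) ⊆ cthickening 1 K :=
    (closedBall_subset_closedBall (min_le_right _ _)).trans (closedBall_subset_cthickening hb 1)
  refine (convex_closedBall b _).norm_image_sub_le_of_norm_hasFDerivWithin_le'
    (fun z _ => ((hf.differentiable one_ne_zero) z).hasFDerivAt.hasFDerivWithinAt)
    (fun z hz => ?_) (mem_closedBall_self (by positivity)) (mem_closedBall_iff_norm.2 hab)
  rw [← dist_eq_norm]
  refine (hδ₀f z (hball hz) b (hball (mem_closedBall_self (by positivity))) ?_).le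
  calc dist z b ≤ min (δ₀ / 2) 1 := hz
    _ < δ₀ := (min_le_left _ _).trans_lt (half_lt_self hδ₀)

theorem exists_fundamental_solution {E : Type*} [NormedAddCommGroup E] [NormedSpace ℝ E]
    [CompleteSpace E] {A : ℝ → E →L[ℝ] E} {L : ℝ≥0} (hA : Continuous A) (hAL : ∀ t, ‖A t‖ ≤ L)
    {τ : ℝ} (hτ : 0 ≤ τ) (hLτ : L * τ ≤ 1 / 2) :
    ∃ Φ : ℝ → E →L[ℝ] E, Φ 0 = ContinuousLinearMap.id ℝ E ∧
      ∀ t ∈ Icc 0 τ, HasDerivWithinAt Φ ((A t).comp (Φ t)) (Icc 0 τ) t := by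
  have hPL : IsPicardLindelof (fun t Ψ => (A t).comp Ψ) (tmin := 0) (tmax := τ)
      ⟨0, left_mem_Icc.2 hτ⟩ (ContinuousLinearMap.id ℝ E) 1 0 (2 * L) L := by
    refine ⟨fun t _ => LipschitzWith.lipschitzOnWith ?_, fun Ψ _ => ?_, fun t _ Ψ hΨ => ?_, ?_⟩
    · refine LipschitzWith.of_dist_le_mul fun Ψ Ψ' => ?_
      rw [dist_eq_norm, dist_eq_norm, ← ContinuousLinearMap.comp_sub]
      exact (ContinuousLinearMap.opNorm_comp_le _ _).trans
        (mul_le_mul_of_nonneg_right (hAL t) (norm_nonneg _))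
    · exact (hA.clm_comp continuous_const).continuousOn
    · have hΨ2 : ‖Ψ‖ ≤ 2 := by
        have := norm_le_of_mem_closedBall hΨ
        push_cast at this
        linarith [ContinuousLinearMap.norm_id_le (𝕜 := ℝ) (E := E)]
      calc ‖(A t).comp Ψ‖ ≤ ‖A t‖ * ‖Ψ‖ := ContinuousLinearMap.opNorm_comp_le _ _
        _ ≤ L * 2 := mul_le_mul (hAL t) hΨ2 (norm_nonneg _) L.2
        _ = ↑(2 * L) := by push_cast; ring
    · simp only [sub_zero, sub_self, max_eq_left hτ, NNReal.coe_one, NNReal.coe_zero]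
      push_cast
      linarith
  exact hPL.exists_eq_forall_mem_Icc_hasDerivWithinAt₀

theorem ContDiff.lipschitzWith_of_norm_fderiv_le {E F : Type*} [NormedAddCommGroup E]
    [NormedSpace ℝ E] [NormedAddCommGroup F] [NormedSpace ℝ F] {f : E → F} {L : ℝ≥0}
    (hf : ContDiff ℝ 1 f) (hf1 : ∀ x, ‖fderiv ℝ f x‖ ≤ L) : LipschitzWith L f :=
  lipschitzWith_of_nnnorm_fderiv_le (hf.differentiable one_ne_zero) fun x => by
    exact_mod_cast hf1 x

section Flow

variable {E : Type*} [NormedAddCommGroup E] [NormedSpace ℝ E] {f : E → E} {U : E → ℝ → E}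
  {L : ℝ≥0}

theorem continuous_flow (hU : ∀ x t, HasDerivAt (U x) (f (U x t)) t) (x : E) :
    Continuous (U x) :=
  continuous_iff_continuousAt.2 fun t => (hU x t).continuousAt

theorem flow_add (hf : LipschitzWith L f) (hU : ∀ x t, HasDerivAt (U x) (f (U x t)) t)
    (hU0 : ∀ x, U x 0 = x) (x : E) (s t : ℝ) : U (U x s) t = U x (s + t) :=
  congrFun (ODE_solution_unique_univ (v := fun _ => f) (s := fun _ => univ) (t₀ := 0)
    (fun _ => hf.lipschitzOnWith) (fun t => ⟨hU _ t, trivial⟩)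
    (fun t => ⟨(hU x (s + t)).comp_const_add s t, trivial⟩) (by rw [hU0, add_zero])) t

theorem iterate_flow (hf : LipschitzWith L f) (hU : ∀ x t, HasDerivAt (U x) (f (U x t)) t)
    (hU0 : ∀ x, U x 0 = x) (τ : ℝ) (n : ℕ) : (fun x => U x τ)^[n] = fun x => U x (n * τ) := by
  induction n with
  | zero => funext x; simp [hU0]
  | succ n ih =>
    funext x
    rw [Function.iterate_succ_apply', ih, flow_add hf hU hU0]
    push_cast
    ring_nf

theorem dist_flow_le (hf : LipschitzWith L f) (hU : ∀ x t, HasDerivAt (U x) (f (U x t)) t)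
    (hU0 : ∀ x, U x 0 = x) {t : ℝ} (ht : 0 ≤ t) (x y : E) :
    dist (U x t) (U y t) ≤ dist x y * exp (L * t) := by
  simpa [hU0] using dist_le_of_trajectories_ODE (v := fun _ => f) (fun _ => hf)
    (continuous_flow hU x).continuousOn (fun s _ => (hU x s).hasDerivWithinAt)
    (continuous_flow hU y).continuousOn (fun s _ => (hU y s).hasDerivWithinAt)
    (le_of_eq (by rw [hU0, hU0])) t ⟨ht, le_rfl⟩

theorem norm_flow_sub_le {M : ℝ} (hf : ∀ x, ‖f x‖ ≤ M)
    (hU : ∀ x t, HasDerivAt (U x) (f (U x t)) t) (hU0 : ∀ x, U x 0 = x) {t : ℝ} (ht : 0 ≤ t)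
    (x : E) : ‖U x t - x‖ ≤ t * M := by
  simpa [hU0, abs_of_nonneg ht, mul_comm] using
    (convex_Icc 0 t).norm_image_sub_le_of_norm_hasDerivWithin_le
      (fun s _ => (hU x s).hasDerivWithinAt) (fun s _ => hf _) (left_mem_Icc.2 ht)
      (right_mem_Icc.2 ht)

theorem norm_flow_sub_sub_flow_sub_le (hf : LipschitzWith L f)
    (hU : ∀ x t, HasDerivAt (U x) (f (U x t)) t) (hU0 : ∀ x, U x 0 = x) {t : ℝ} (ht : 0 ≤ t)
    (x y : E) : ‖(U y t - y) - (U x t - x)‖ ≤ (exp (L * t) - 1) * ‖y - x‖ := by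
  have hfx : LipschitzWith L fun u => f (u + x) :=
    LipschitzWith.of_dist_le_mul fun u v => by
      simpa using hf.dist_le_mul (u + x) (v + x)
  have h := dist_le_of_approx_trajectories_ODE (v := fun _ u => f (u + x))
    (εf := L * ‖y - x‖) (εg := 0) (δ := 0) (fun _ => hfx)
    ((continuous_flow hU y).sub continuous_const).continuousOn
    (fun s _ => ((hU y s).sub_const y).hasDerivWithinAt)
    (fun s _ => by
      simpa [dist_eq_norm, norm_sub_rev y x, sub_add] using
        hf.dist_le_mul (U y s) (U y s - y + x))
    ((continuous_flow hU x).sub continuous_const).continuousOn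
    (fun s _ => ((hU x s).sub_const x).hasDerivWithinAt)
    (fun s _ => by simp) (le_of_eq (by simp [hU0])) t ⟨ht, le_rfl⟩
  rw [dist_eq_norm, add_zero, sub_zero, gronwallBound_zero_mul_self] at h
  simpa [mul_comm] using h

theorem norm_flow_sub_sub_fundamental_solution_le (hf1 : ∀ x, ‖fderiv ℝ f x‖ ≤ L)
    (hU : ∀ x t, HasDerivAt (U x) (f (U x t)) t) (hU0 : ∀ x, U x 0 = x) {τ : ℝ} (hτ : 0 ≤ τ)
    {x₀ y : E} {Φ : ℝ → E →L[ℝ] E} (hΦ0 : Φ 0 = ContinuousLinearMap.id ℝ E)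
    (hΦ : ∀ t ∈ Icc 0 τ, HasDerivWithinAt Φ ((fderiv ℝ f (U x₀ t)).comp (Φ t)) (Icc 0 τ) t)
    {η : ℝ}
    (hη : ∀ t ∈ Icc 0 τ, ‖f (U y t) - f (U x₀ t) - fderiv ℝ f (U x₀ t) (U y t - U x₀ t)‖ ≤ η) :
    ‖U y τ - U x₀ τ - Φ τ (y - x₀)‖ ≤ η * gronwallBound 0 L 1 τ := by
  have h := dist_le_of_approx_trajectories_ODE (v := fun t u => fderiv ℝ f (U x₀ t) u)
    (f := fun t => U y t - U x₀ t) (g := fun t => Φ t (y - x₀)) (εf := η) (εg := 0) (δ := 0)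
    (fun t => (fderiv ℝ f (U x₀ t)).lipschitz.weaken (by exact_mod_cast hf1 _))
    ((continuous_flow hU y).sub (continuous_flow hU x₀)).continuousOn
    (fun t _ => ((hU y t).sub (hU x₀ t)).hasDerivWithinAt)
    (fun t ht => by rw [dist_eq_norm]; exact hη t (Ico_subset_Icc_self ht))
    (fun t ht => ((hΦ t ht).continuousWithinAt).clm_apply continuousWithinAt_const)
    (fun t ht => by
      simpa using ((hΦ t (Ico_subset_Icc_self ht)).mono_of_mem_nhdsWithin
        (Icc_mem_nhdsGE_of_mem ht)).clm_apply (hasDerivWithinAt_const t _ (y - x₀)))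
    (fun t _ => by simp) (by simp [hU0, hΦ0]) τ ⟨hτ, le_rfl⟩
  rwa [add_zero, sub_zero, gronwallBound_zero_eq_mul, dist_eq_norm] at h

theorem hasFDerivAt_flow_of_fundamental_solution [ProperSpace E] (hf : ContDiff ℝ 1 f)
    (hf1 : ∀ x, ‖fderiv ℝ f x‖ ≤ L) (hU : ∀ x t, HasDerivAt (U x) (f (U x t)) t)
    (hU0 : ∀ x, U x 0 = x) {τ : ℝ} (hτ : 0 ≤ τ) {x₀ : E} {Φ : ℝ → E →L[ℝ] E}
    (hΦ0 : Φ 0 = ContinuousLinearMap.id ℝ E)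
    (hΦ : ∀ t ∈ Icc 0 τ, HasDerivWithinAt Φ ((fderiv ℝ f (U x₀ t)).comp (Φ t)) (Icc 0 τ) t) :
    HasFDerivAt (fun x => U x τ) (Φ τ) x₀ := by
  set M := exp (L * τ)
  set G := gronwallBound 0 L 1 τ
  have hG : 0 ≤ G := by
    simpa [gronwallBound_x0] using gronwallBound_mono le_rfl zero_le_one L.2 hτ
  refine HasFDerivAt.of_isLittleO (isLittleO_iff.2 fun c hc => ?_)
  set ε := c / (M * G + 1)
  obtain ⟨δ, hδ, hlin⟩ := IsCompact.exists_forall_norm_sub_sub_fderiv_le hf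
    (isCompact_Icc.image (continuous_flow hU x₀)) (ε := ε) (by positivity)
  filter_upwards [closedBall_mem_nhds x₀ (div_pos hδ (exp_pos (L * τ)))] with y hy
  have hyδ : M * ‖y - x₀‖ ≤ δ := by
    rwa [mem_closedBall_iff_norm, le_div_iff₀ (exp_pos _), mul_comm] at hy
  have hclose : ∀ t ∈ Icc 0 τ, ‖U y t - U x₀ t‖ ≤ M * ‖y - x₀‖ := fun t ht => by
    rw [← dist_eq_norm, ← dist_eq_norm, mul_comm]
    exact (dist_flow_le (hf.lipschitzWith_of_norm_fderiv_le hf1) hU hU0 ht.1 y x₀).trans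
      (mul_le_mul_of_nonneg_left (exp_le_exp.2 (mul_le_mul_of_nonneg_left ht.2 L.2)) dist_nonneg)
  have hrem := norm_flow_sub_sub_fundamental_solution_le hf1 hU hU0 hτ hΦ0 hΦ fun t ht =>
    (hlin _ (mem_image_of_mem _ ht) _ ((hclose t ht).trans hyδ)).trans
      (mul_le_mul_of_nonneg_left (hclose t ht) (by positivity))
  have hεMG : ε * (M * G) ≤ c := by
    rw [div_mul_eq_mul_div, div_le_iff₀ (by positivity)]
    nlinarith [mul_nonneg (exp_pos (L * τ)).le hG]
  calc ‖U y τ - U x₀ τ - Φ τ (y - x₀)‖ ≤ ε * (M * ‖y - x₀‖) * G := hrem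
    _ = ε * (M * G) * ‖y - x₀‖ := by ring
    _ ≤ c * ‖y - x₀‖ := mul_le_mul_of_nonneg_right hεMG (norm_nonneg _)

theorem differentiable_flow_of_mul_le [ProperSpace E] (hf : ContDiff ℝ 1 f)
    (hf1 : ∀ x, ‖fderiv ℝ f x‖ ≤ L) (hU : ∀ x t, HasDerivAt (U x) (f (U x t)) t)
    (hU0 : ∀ x, U x 0 = x) {τ : ℝ} (hτ : 0 ≤ τ) (hLτ : L * τ ≤ 1 / 2) :
    Differentiable ℝ fun x => U x τ := fun x₀ => by
  obtain ⟨Φ, hΦ0, hΦ⟩ := exists_fundamental_solution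
    ((hf.continuous_fderiv one_ne_zero).comp (continuous_flow hU x₀)) (fun t => hf1 _) hτ hLτ
  exact (hasFDerivAt_flow_of_fundamental_solution hf hf1 hU hU0 hτ hΦ0 hΦ).differentiableAt

theorem differentiable_flow [ProperSpace E] (hf : ContDiff ℝ 1 f)
    (hf1 : ∀ x, ‖fderiv ℝ f x‖ ≤ L) (hU : ∀ x t, HasDerivAt (U x) (f (U x t)) t)
    (hU0 : ∀ x, U x 0 = x) {T : ℝ} (hT : 0 ≤ T) : Differentiable ℝ fun x => U x T := by
  set n : ℕ := ⌈2 * L * T⌉₊ + 1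
  have hn : (0 : ℝ) < n := by positivity
  have hsmall : L * (T / n) ≤ 1 / 2 := by
    rw [mul_div_assoc', div_le_iff₀ hn]
    have : 2 * L * T < n := by push_cast [n]; linarith [Nat.le_ceil (2 * L * T)]
    linarith
  have hiter := iterate_flow (hf.lipschitzWith_of_norm_fderiv_le hf1) hU hU0 (T / n) n
  rw [mul_div_cancel₀ T hn.ne'] at hiter
  exact hiter ▸ (differentiable_flow_of_mul_le hf hf1 hU hU0 (by positivity) hsmall).iterate n

theorem norm_fderiv_flow_sub_le (hf : LipschitzWith L f)
    (hU : ∀ x t, HasDerivAt (U x) (f (U x t)) t) (hU0 : ∀ x, U x 0 = x) {t : ℝ} (ht : 0 ≤ t)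
    (x : E) : ‖fderiv ℝ (fun y => U y t - y) x‖ ≤ exp (L * t) - 1 :=
  norm_fderiv_le_of_lip' ℝ (sub_nonneg.2 (one_le_exp (mul_nonneg L.2 ht)))
    (Eventually.of_forall fun y => norm_flow_sub_sub_flow_sub_le hf hU hU0 ht x y)

end Flow

theorem stmt0_general (d : ℕ) (Δt L₀ L₁ : ℝ) (hΔt : 0 < Δt) (hL₁ : 0 < L₁)
    (f : EuclideanSpace ℝ (Fin d) → EuclideanSpace ℝ (Fin d))
    (hf : ContDiff ℝ 1 f)
    (hf0 : ∀ x, ‖f x‖ ≤ L₀)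
    (hf1 : ∀ x, ‖fderiv ℝ f x‖ ≤ L₁)
    (U : EuclideanSpace ℝ (Fin d) → ℝ → EuclideanSpace ℝ (Fin d))
    (hU0 : ∀ x, U x 0 = x)
    (hU : ∀ x t, HasDerivAt (U x) (f (U x t)) t) :
    (∀ x, ‖U x Δt - x‖ ≤ Δt * L₀) ∧
    Differentiable ℝ (fun x => U x Δt - x) ∧
    (∀ x, ‖fderiv ℝ (fun y => U y Δt - y) x‖ ≤ Real.exp (L₁ * Δt) - 1) := by
  lift L₁ to ℝ≥0 using hL₁.le
  exact ⟨norm_flow_sub_le hf0 hU hU0 hΔt.le,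
    (differentiable_flow hf hf1 hU hU0 hΔt.le).sub differentiable_id,
    norm_fderiv_flow_sub_le (hf.lipschitzWith_of_norm_fderiv_le hf1) hU hU0 hΔt.le⟩

/-- Lemma `lmm:stubble:smooth`.
For a continuously differentiable `f : ℝ^d → ℝ^d` with `‖f‖ ≤ L₀` and `‖Df‖_op ≤ L₁`
everywhere, the increment map `ι x = Υ(f, Δt, x) = U(f, x, Δt) - x` of the flow `U`
of the ODE `u̇ = f(u)` satisfies `‖ι x‖ ≤ Δt·L₀` and `‖Dι x‖_op ≤ exp(L₁·Δt) - 1`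
for all `x`. -/
theorem stmt0 (d : ℕ) (Δt L₀ L₁ : ℝ) (hΔt : 0 < Δt) (hL₀ : 0 < L₀) (hL₁ : 0 < L₁)
    (f : EuclideanSpace ℝ (Fin d) → EuclideanSpace ℝ (Fin d))
    (hf : ContDiff ℝ 1 f)
    (hf0 : ∀ x, ‖f x‖ ≤ L₀)
    (hf1 : ∀ x, ‖fderiv ℝ f x‖ ≤ L₁)
    (U : EuclideanSpace ℝ (Fin d) → ℝ → EuclideanSpace ℝ (Fin d))
    (hU0 : ∀ x, U x 0 = x)
    (hU : ∀ x t, HasDerivAt (U x) (f (U x t)) t) :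
    (∀ x, ‖U x Δt - x‖ ≤ Δt * L₀) ∧
    Differentiable ℝ (fun x => U x Δt - x) ∧
    (∀ x, ‖fderiv ℝ (fun y => U y Δt - y) x‖ ≤ Real.exp (L₁ * Δt) - 1) :=
  stmt0_general d Δt L₀ L₁ hΔt hL₁ f hf hf0 hf1 U hU0 hU
end

section
/- Let S be a finite linearly ordered set with at least one element. Then the number of increasing trees with node set S equals (#S − 1)!. -/
/-!
An increasing tree is determined by the parent of each non-root node `n`, which may be any
`m < n`; conversely every such choice of parents gives an increasing tree. Listing `S` as
`s₀ < s₁ < ⋯ < s_{k-1}`, the node `sᵢ` has `i` possible parents, so there are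
`1 · 2 ⋯ (k - 1) = (k - 1)!` increasing trees.
-/

open Finset
open scoped Nat

theorem Fin.prod_val_ne_zero_eq_factorial (M : ℕ) :
    ∏ i : {i : Fin (M + 1) // i ≠ 0}, (i : ℕ) = M ! := by
  rw [← Fintype.prod_equiv (finSuccAboveEquiv 0) (fun i => (i.succ : ℕ)) _ (fun i => rfl),
    ← prod_range_add_one_eq_factorial, ← Fin.prod_univ_eq_prod_range (· + 1)]
  rfl

theorem OrderIso.card_subtype_lt_apply {S : Type*} [LinearOrder S] {k : ℕ} (e : Fin k ≃o S)
    (i : Fin k) : Nat.card {m // m < e i} = i := by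
  rw [← Fin.card_Iio, ← Nat.card_eq_finsetCard]
  exact Nat.card_congr <| (e.toEquiv.subtypeEquiv fun j => by simp).symm

section

variable {S : Type*} [Fintype S] [LinearOrder S] [Nonempty S]

variable (S) in
abbrev IncreasingTree :=
  {E : Finset (S × S) //
    (∀ e ∈ E, e.1 < e.2) ∧
    E.card = Fintype.card S - 1 ∧
    (∀ n : S, n ≠ univ.min' univ_nonempty → ∃! e : S × S, e ∈ E ∧ e.2 = n)}

namespace IncreasingTree

def ofParent (p : ∀ n : {n : S // n ≠ univ.min' univ_nonempty}, {m : S // m < n}) :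
    IncreasingTree S := by
  refine ⟨univ.image fun n => ((p n : S), (n : S)), ?_, ?_, ?_⟩
  · simp only [mem_image, mem_univ, true_and, forall_exists_index]
    rintro _ n rfl
    exact (p n).2
  · rw [Finset.card_image_of_injective _ fun a b hab => Subtype.ext (congrArg Prod.snd hab),
      Finset.card_univ, Fintype.card_subtype_compl, Fintype.card_subtype_eq]
  · intro n hn
    refine ⟨(p ⟨n, hn⟩, n), ⟨mem_image_of_mem _ (mem_univ _), rfl⟩, ?_⟩
    simp only [mem_image, mem_univ, true_and, and_imp, forall_exists_index]
    rintro _ n rfl rfl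
    rfl

theorem mem_ofParent {p : ∀ n : {n : S // n ≠ univ.min' univ_nonempty}, {m : S // m < n}}
    {x : S × S} : x ∈ (ofParent p).1 ↔ ∃ n, ((p n : S), (n : S)) = x := by
  simp [ofParent]

theorem ofParent_bijective : Function.Bijective (ofParent (S := S)) := by
  constructor
  · intro p q hpq
    funext n
    have hn : ((p n : S), (n : S)) ∈ (ofParent q).1 := hpq ▸ mem_ofParent.2 ⟨n, rfl⟩
    obtain ⟨n', hn'⟩ := mem_ofParent.1 hn
    obtain rfl : n' = n := Subtype.ext (congrArg Prod.snd hn')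
    exact (Subtype.ext (congrArg Prod.fst hn')).symm
  · rintro ⟨E, hinc, -, hparent⟩
    choose e heE he2 using
      fun n : {n : S // n ≠ univ.min' univ_nonempty} => (hparent n n.2).exists
    refine ⟨fun n => ⟨(e n).1, he2 n ▸ hinc _ (heE n)⟩, Subtype.ext ?_⟩
    ext x
    rw [mem_ofParent]
    constructor
    · rintro ⟨n, rfl⟩
      simpa [← he2 n] using heE n
    · intro hx
      have hroot : x.2 ≠ univ.min' univ_nonempty :=
        ((min'_le _ _ (mem_univ _)).trans_lt (hinc x hx)).ne'
      have hex :=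
        (hparent x.2 hroot).unique (y₁ := e ⟨x.2, hroot⟩) ⟨heE _, he2 _⟩ ⟨hx, rfl⟩
      exact ⟨⟨x.2, hroot⟩, Prod.ext (congrArg Prod.fst hex :) rfl⟩

end IncreasingTree

theorem prod_card_subtype_lt_eq_factorial :
    ∏ n : {n : S // n ≠ univ.min' univ_nonempty}, Nat.card {m // m < (n : S)} =
      (Fintype.card S - 1)! := by
  obtain ⟨M, hM⟩ : ∃ M, Fintype.card S = M + 1 := Nat.exists_eq_add_one.2 Fintype.card_pos
  let e : Fin (M + 1) ≃o S := Fintype.orderIsoFinOfCardEq S hM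
  have he0 : e 0 = univ.min' univ_nonempty :=
    le_antisymm (e.le_symm_apply.1 (Fin.zero_le _)) (min'_le _ _ (mem_univ _))
  rw [hM, Nat.add_sub_cancel, ← Fin.prod_val_ne_zero_eq_factorial]
  exact (Fintype.prod_equiv (e.toEquiv.subtypeEquiv fun i => by simp [← he0]) _ _
    fun i => (e.card_subtype_lt_apply i).symm).symm

end

/-- Lemma `lmm:numtrees`.
Let `S` be a nonempty finite linearly ordered set.  An increasing tree on `S` is a set
`E` of edges `(n₁, n₂)` with `n₁ < n₂` and `#E = #S − 1` such that every node other
than the minimum of `S` has exactly one incoming edge (necessarily from a strictly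
smaller node).  The number of increasing trees with node set `S` is `(#S − 1)!`. -/
theorem stmt5 {S : Type*} [Fintype S] [LinearOrder S] [Nonempty S] :
    Nat.card {E : Finset (S × S) //
        (∀ e ∈ E, e.1 < e.2) ∧
        E.card = Fintype.card S - 1 ∧
        (∀ n : S, n ≠ Finset.univ.min' Finset.univ_nonempty →
          ∃! e : S × S, e ∈ E ∧ e.2 = n)} =
      Nat.factorial (Fintype.card S - 1) := by
  rw [← Nat.card_eq_of_bijective _ IncreasingTree.ofParent_bijective, Nat.card_pi]
  exact prod_card_subtype_lt_eq_factorial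
end

section
/- Let d, β ∈ ℕ and L₀, …, L_β > 0. Let f : ℝ^d → ℝ^d be β-times continuously differentiable with sup_{x∈ℝ^d} ‖D^k f(x)‖_op ≤ L_k for all k ∈ {0, …, β}, and set L := max_{0≤k≤β} L_k. Let x₀ ∈ ℝ^d and u := U(f, x₀, ·). Then u is (β+1)-times continuously differentiable, and for every k ∈ {1, …, β+1}, sup_{t∈ℝ} ‖D^k u(t)‖ ≤ (k−1)!·L^k. -/
/-!
Differentiating `u̇ = f ∘ u` repeatedly gives `u^(k+1) = H_k ∘ u`, where `H₀ = f` and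
`H_{k+1} = DH_k · f`. Leibniz's rule for the bilinear evaluation map bounds the derivatives
of the `H_k` inductively: `‖D^j H_k‖ ≤ k! (k+1)^j L^(k+1)` whenever `k + j ≤ β`, the factor
`(k+2)^j` of the next step coming from the binomial sum `∑ (j choose i) (k+1)^i`.
Taking `j = 0` bounds `u^(k+1)` by `k! L^(k+1)`.
-/

open Finset
open scoped Nat

variable {E : Type*} [NormedAddCommGroup E] [NormedSpace ℝ E]

noncomputable def iteratedLieDeriv (f : E → E) : ℕ → E → E
  | 0 => f
  | k + 1 => fun x => fderiv ℝ (iteratedLieDeriv f k) x (f x)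

theorem contDiff_iteratedLieDeriv {f : E → E} {m k : ℕ} (hf : ContDiff ℝ (m + k : ℕ) f) :
    ContDiff ℝ m (iteratedLieDeriv f k) := by
  induction k generalizing m with
  | zero => simpa [iteratedLieDeriv] using hf
  | succ k ih =>
    have hH : ContDiff ℝ (m + 1 : ℕ) (iteratedLieDeriv f k) := ih (by rwa [Nat.add_right_comm])
    exact (hH.fderiv_right (by push_cast; rfl)).clm_apply (hf.of_le (by norm_cast; omega))

theorem norm_iteratedFDeriv_iteratedLieDeriv_le {f : E → E} {n : ℕ} (hf : ContDiff ℝ n f)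
    {L : ℝ} (hL : 0 ≤ L) (hfL : ∀ j ≤ n, ∀ x, ‖iteratedFDeriv ℝ j f x‖ ≤ L)
    {k j : ℕ} (hkj : k + j ≤ n) (x : E) :
    ‖iteratedFDeriv ℝ j (iteratedLieDeriv f k) x‖ ≤ k ! * (k + 1) ^ j * L ^ (k + 1) := by
  induction k generalizing j with
  | zero => simpa [iteratedLieDeriv] using hfL j (by omega) x
  | succ k ih =>
    have hDH : ContDiff ℝ j (fderiv ℝ (iteratedLieDeriv f k)) :=
      (contDiff_iteratedLieDeriv (m := j + 1) (hf.of_le (by norm_cast; omega))).fderiv_right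
        (by push_cast; rfl)
    have hleibniz := norm_iteratedFDeriv_clm_apply hDH (hf.of_le (by norm_cast; omega)) x le_rfl
    have hterm : ∀ i ∈ range (j + 1),
        (j.choose i : ℝ) * ‖iteratedFDeriv ℝ i (fderiv ℝ (iteratedLieDeriv f k)) x‖ *
            ‖iteratedFDeriv ℝ (j - i) f x‖ ≤
          (j.choose i : ℝ) * (k ! * (k + 1) ^ (i + 1) * L ^ (k + 1)) * L := by
      intro i hi
      have hi : i ≤ j := Nat.lt_succ_iff.mp (mem_range.mp hi)
      rw [norm_iteratedFDeriv_fderiv]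
      gcongr
      · exact ih (by omega)
      · exact hfL _ (by omega) x
    have hbinomial : ∑ i ∈ range (j + 1), (j.choose i : ℝ) * (k + 1) ^ i = (k + 2) ^ j := by
      rw [show ((k : ℝ) + 2) = (k + 1) + 1 by ring, add_pow]
      exact sum_congr rfl fun i _ => by ring
    calc ‖iteratedFDeriv ℝ j (iteratedLieDeriv f (k + 1)) x‖
        ≤ ∑ i ∈ range (j + 1), (j.choose i : ℝ) * (k ! * (k + 1) ^ (i + 1) * L ^ (k + 1)) * L :=
          hleibniz.trans (sum_le_sum hterm)
      _ = k ! * (k + 1) * L ^ (k + 2) * ∑ i ∈ range (j + 1), (j.choose i : ℝ) * (k + 1) ^ i := by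
          rw [mul_sum]
          exact sum_congr rfl fun i _ => by ring
      _ = (k + 1)! * ((k + 1 : ℕ) + 1) ^ j * L ^ (k + 1 + 1) := by
          rw [hbinomial, Nat.factorial_succ]
          push_cast
          ring

section Trajectory

variable {f : E → E} {u : ℝ → E}

theorem deriv_eq_comp_of_hasDerivAt (hu : ∀ t, HasDerivAt u (f (u t)) t) : deriv u = f ∘ u :=
  funext fun t => (hu t).deriv

theorem contDiff_succ_of_hasDerivAt_comp (hu : ∀ t, HasDerivAt u (f (u t)) t) {n : ℕ}
    (hf : ContDiff ℝ n f) : ContDiff ℝ (n + 1) u := by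
  have hdiff : Differentiable ℝ u := fun t => (hu t).differentiableAt
  induction n with
  | zero =>
    rw [CharP.cast_eq_zero, zero_add, contDiff_one_iff_deriv, deriv_eq_comp_of_hasDerivAt hu]
    exact ⟨hdiff, hf.continuous.comp hdiff.continuous⟩
  | succ n ih =>
    have hun : ContDiff ℝ (n + 1) u := ih (hf.of_le (by norm_cast; omega))
    rw [Nat.cast_succ, contDiff_succ_iff_deriv, deriv_eq_comp_of_hasDerivAt hu]
    exact ⟨hdiff, by simp, hf.comp hun⟩

theorem iteratedDeriv_succ_eq_iteratedLieDeriv_comp (hu : ∀ t, HasDerivAt u (f (u t)) t)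
    {k : ℕ} (hf : ContDiff ℝ k f) : iteratedDeriv (k + 1) u = iteratedLieDeriv f k ∘ u := by
  induction k with
  | zero => exact iteratedDeriv_one.trans (deriv_eq_comp_of_hasDerivAt hu)
  | succ k ih =>
    have hH : ContDiff ℝ (1 : ℕ) (iteratedLieDeriv f k) :=
      contDiff_iteratedLieDeriv (by rwa [add_comm])
    rw [iteratedDeriv_succ, ih (hf.of_le (by norm_cast; omega))]
    funext t
    exact (((hH.differentiable one_ne_zero) (u t)).hasFDerivAt.comp_hasDerivAt t (hu t)).deriv

theorem norm_iteratedDeriv_succ_le_of_hasDerivAt_comp (hu : ∀ t, HasDerivAt u (f (u t)) t)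
    {n : ℕ} (hf : ContDiff ℝ n f) {L : ℝ} (hL : 0 ≤ L)
    (hfL : ∀ j ≤ n, ∀ x, ‖iteratedFDeriv ℝ j f x‖ ≤ L) {k : ℕ} (hk : k ≤ n) (t : ℝ) :
    ‖iteratedDeriv (k + 1) u t‖ ≤ k ! * L ^ (k + 1) := by
  rw [iteratedDeriv_succ_eq_iteratedLieDeriv_comp hu (hf.of_le (by exact_mod_cast hk)),
    Function.comp_apply, ← norm_iteratedFDeriv_zero (𝕜 := ℝ)]
  simpa using norm_iteratedFDeriv_iteratedLieDeriv_le hf hL hfL (j := 0) (by omega) (u t)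

end Trajectory

theorem stmt6 (d β : ℕ) (Lc : ℕ → ℝ)
    (f : EuclideanSpace ℝ (Fin d) → EuclideanSpace ℝ (Fin d))
    (hf : ContDiff ℝ (β : ℕ∞) f)
    (hbound : ∀ k ≤ β, ∀ x, ‖iteratedFDeriv ℝ k f x‖ ≤ Lc k)
    (u : ℝ → EuclideanSpace ℝ (Fin d))
    (hu : ∀ t, HasDerivAt u (f (u t)) t) :
    ContDiff ℝ ((β : ℕ∞) + 1) u ∧
    ∀ k, 1 ≤ k → k ≤ β + 1 → ∀ t,
      ‖iteratedFDeriv ℝ k u t‖ ≤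
        (Nat.factorial (k - 1) : ℝ) *
          ((Finset.range (β + 1)).sup' (by simp) Lc) ^ k := by
  set L := (range (β + 1)).sup' (by simp) Lc
  have hLc_le : ∀ k ≤ β, Lc k ≤ L := fun k hk => le_sup' Lc (mem_range.mpr (by omega))
  have hfL : ∀ k ≤ β, ∀ x, ‖iteratedFDeriv ℝ k f x‖ ≤ L := fun k hk x =>
    (hbound k hk x).trans (hLc_le k hk)
  have hL : 0 ≤ L := (norm_nonneg _).trans (hfL 0 (Nat.zero_le β) 0)
  have hf' : ContDiff ℝ β f := by exact_mod_cast hf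
  refine ⟨by exact_mod_cast contDiff_succ_of_hasDerivAt_comp hu hf', fun k hk1 hk2 t => ?_⟩
  obtain ⟨m, rfl⟩ : ∃ m, k = m + 1 := ⟨k - 1, by omega⟩
  rw [norm_iteratedFDeriv_eq_norm_iteratedDeriv, Nat.add_sub_cancel]
  exact norm_iteratedDeriv_succ_le_of_hasDerivAt_comp hu hf' hL hfL (by omega : m ≤ β) t
end

section
/- Let N, d ∈ ℕ and let 𝐱 = (x₁, …, x_N), 𝐳 = (z₁, …, z_N) ∈ (ℝ^d)^N. Assume γ := max_{k≤N} ‖x_k − z_k‖ < (1/2)·diam(𝐱), where diam(𝐱) := max_{i,j} ‖x_i − x_j‖. Then max_{k≤N} ‖η_𝐱(x_k) − η_𝐳(z_k)‖ ≤ 4γ / (diam(𝐱) − 2γ), where for a tuple 𝐰 with diam(𝐰) > 0 the normalization is η_𝐰(x) := (x − (1/N)Σ_{i=1}^N w_i) / diam(𝐰). -/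
/-- The diameter `diam(𝐰) = max_{i,j} ‖w_i − w_j‖` of a tuple of points in `ℝ^d`. -/
noncomputable def tupDiam {ι : Type*} {d : ℕ}
    (w : ι → EuclideanSpace ℝ (Fin d)) : ℝ :=
  ⨆ p : ι × ι, ‖w p.1 - w p.2‖

/-- The normalization map `η_𝐰(y) = (y − (1/N)·Σᵢ wᵢ)/diam(𝐰)` associated to a
tuple `𝐰` of `N` points of `ℝ^d`. -/
noncomputable def normMap {ι : Type*} [Fintype ι] {d : ℕ}
    (w : ι → EuclideanSpace ℝ (Fin d)) (y : EuclideanSpace ℝ (Fin d)) :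
    EuclideanSpace ℝ (Fin d) :=
  (tupDiam w)⁻¹ • (y - (Fintype.card ι : ℝ)⁻¹ • ∑ i, w i)

/-!
Write `u = x_k − x̄` and `v = z_k − z̄` for the points centred at the means of the tuples.
Then `‖u‖ ≤ diam 𝐱`, `‖u − v‖ ≤ 2γ` (both the points and their means move by at most `γ`),
and `|diam 𝐱 − diam 𝐳| ≤ 2γ` by the triangle inequality. Splitting
`u / diam 𝐱 − v / diam 𝐳 = (1/diam 𝐱 − 1/diam 𝐳) u + (u − v) / diam 𝐳`
bounds the left side by `4γ / diam 𝐳 ≤ 4γ / (diam 𝐱 − 2γ)`.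
-/

open Finset

section Mean

variable {ι E : Type*} [Fintype ι]

noncomputable def tupMean [AddCommGroup E] [Module ℝ E] (w : ι → E) : E :=
  (Fintype.card ι : ℝ)⁻¹ • ∑ i, w i

theorem tupMean_sub [AddCommGroup E] [Module ℝ E] (a b : ι → E) :
    tupMean a - tupMean b = tupMean (a - b) := by
  simp only [tupMean, Pi.sub_apply, sum_sub_distrib, smul_sub]

theorem sub_tupMean [Nonempty ι] [AddCommGroup E] [Module ℝ E] (y : E) (w : ι → E) :
    y - tupMean w = tupMean fun i => y - w i := by
  have hcard : (Fintype.card ι : ℝ) ≠ 0 := Nat.cast_ne_zero.mpr Fintype.card_ne_zero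
  rw [tupMean, tupMean, sum_sub_distrib, sum_const, card_univ, smul_sub,
    ← Nat.cast_smul_eq_nsmul ℝ, smul_smul, inv_mul_cancel₀ hcard, one_smul]

theorem norm_tupMean_le [Nonempty ι] [SeminormedAddCommGroup E] [NormedSpace ℝ E]
    {w : ι → E} {C : ℝ} (h : ∀ i, ‖w i‖ ≤ C) : ‖tupMean w‖ ≤ C := by
  have hcard : (0 : ℝ) < Fintype.card ι := Nat.cast_pos.mpr Fintype.card_pos
  calc ‖tupMean w‖ = (Fintype.card ι : ℝ)⁻¹ * ‖∑ i, w i‖ := by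
        rw [tupMean, norm_smul, norm_inv, RCLike.norm_natCast]
    _ ≤ (Fintype.card ι : ℝ)⁻¹ * ∑ _i : ι, C := by
        gcongr
        exact norm_sum_le_of_le _ fun i _ => h i
    _ = C := by
        rw [sum_const, card_univ, nsmul_eq_mul, inv_mul_cancel_left₀ hcard.ne']

theorem norm_sub_tupMean_sub_sub_tupMean_le [Nonempty ι] [SeminormedAddCommGroup E]
    [NormedSpace ℝ E] {a b : ι → E} {γ : ℝ} (h : ∀ i, ‖a i - b i‖ ≤ γ) (k : ι) :
    ‖(a k - tupMean a) - (b k - tupMean b)‖ ≤ 2 * γ := by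
  have hmean : ‖tupMean a - tupMean b‖ ≤ γ := by
    rw [tupMean_sub]
    exact norm_tupMean_le h
  calc ‖(a k - tupMean a) - (b k - tupMean b)‖
        = ‖(a k - b k) - (tupMean a - tupMean b)‖ := by rw [sub_sub_sub_comm]
    _ ≤ γ + γ := (norm_sub_le _ _).trans (add_le_add (h k) hmean)
    _ = 2 * γ := by ring

end Mean

theorem norm_inv_smul_sub_inv_smul_le {E : Type*} [SeminormedAddCommGroup E]
    [NormedSpace ℝ E] {u v : E} {r s δ : ℝ} (hr : 0 < r) (hs : 0 < s) (hu : ‖u‖ ≤ r)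
    (huv : ‖u - v‖ ≤ δ) (hrs : |r - s| ≤ δ) : ‖r⁻¹ • u - s⁻¹ • v‖ ≤ 2 * δ / s := by
  have hinv : |r⁻¹ - s⁻¹| = |r - s| / (r * s) := by
    rw [inv_sub_inv hr.ne' hs.ne', abs_div, abs_sub_comm, abs_of_pos (mul_pos hr hs)]
  calc ‖r⁻¹ • u - s⁻¹ • v‖ = ‖(r⁻¹ - s⁻¹) • u + s⁻¹ • (u - v)‖ := by
        congr 1
        module
    _ ≤ |r⁻¹ - s⁻¹| * ‖u‖ + s⁻¹ * ‖u - v‖ := by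
        refine (norm_add_le _ _).trans_eq ?_
        rw [norm_smul, norm_smul, Real.norm_eq_abs, Real.norm_eq_abs,
          abs_of_pos (inv_pos.mpr hs)]
    _ ≤ δ / (r * s) * r + s⁻¹ * δ := by
        have hδ : 0 ≤ δ := (norm_nonneg _).trans huv
        rw [hinv]
        gcongr
    _ = 2 * δ / s := by
        field_simp
        ring

section Diam

variable {ι : Type*} {d : ℕ}

theorem norm_sub_le_tupDiam [Finite ι] (w : ι → EuclideanSpace ℝ (Fin d)) (i j : ι) :
    ‖w i - w j‖ ≤ tupDiam w :=
  Finite.le_ciSup (fun p : ι × ι => ‖w p.1 - w p.2‖) (i, j)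

theorem tupDiam_le_add [Finite ι] [Nonempty ι] {a b : ι → EuclideanSpace ℝ (Fin d)} {γ : ℝ}
    (h : ∀ i, ‖a i - b i‖ ≤ γ) : tupDiam a ≤ tupDiam b + 2 * γ := by
  refine ciSup_le fun ⟨i, j⟩ => ?_
  calc ‖a i - a j‖ = ‖(a i - b i) + (b i - b j) + (b j - a j)‖ := by abel_nf
    _ ≤ ‖a i - b i‖ + ‖b i - b j‖ + ‖b j - a j‖ := norm_add₃_le
    _ ≤ γ + tupDiam b + γ := by
        gcongr
        · exact h i
        · exact norm_sub_le_tupDiam b i j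
        · exact norm_sub_rev (b j) (a j) ▸ h j
    _ = tupDiam b + 2 * γ := by ring

theorem abs_tupDiam_sub_le [Finite ι] [Nonempty ι] {a b : ι → EuclideanSpace ℝ (Fin d)}
    {γ : ℝ} (h : ∀ i, ‖a i - b i‖ ≤ γ) : |tupDiam a - tupDiam b| ≤ 2 * γ :=
  abs_sub_le_iff.mpr
    ⟨by linarith [tupDiam_le_add h],
      by linarith [tupDiam_le_add fun i => norm_sub_rev (b i) (a i) ▸ h i]⟩

theorem norm_sub_tupMean_le_tupDiam [Fintype ι] [Nonempty ι]
    (w : ι → EuclideanSpace ℝ (Fin d)) (k : ι) : ‖w k - tupMean w‖ ≤ tupDiam w := by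
  rw [sub_tupMean]
  exact norm_tupMean_le (norm_sub_le_tupDiam w k)

theorem normMap_eq [Fintype ι] (w : ι → EuclideanSpace ℝ (Fin d))
    (y : EuclideanSpace ℝ (Fin d)) :
    normMap w y = (tupDiam w)⁻¹ • (y - tupMean w) :=
  rfl

end Diam

theorem stmt12_general (d N : ℕ)
    (x z : Fin N → EuclideanSpace ℝ (Fin d)) (γ : ℝ)
    (hγdef : γ = ⨆ k, ‖x k - z k‖)
    (hγ : γ < (1 / 2) * tupDiam x) :
    ∀ k, ‖normMap x (x k) - normMap z (z k)‖ ≤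
      4 * γ / (tupDiam x - 2 * γ) := by
  intro k
  have : Nonempty (Fin N) := ⟨k⟩
  have hxz : ∀ i, ‖x i - z i‖ ≤ γ :=
    fun i => hγdef ▸ Finite.le_ciSup (fun k => ‖x k - z k‖) i
  have hγ0 : 0 ≤ γ := (norm_nonneg _).trans (hxz k)
  have hdiam := abs_tupDiam_sub_le hxz
  have hz : tupDiam x - 2 * γ ≤ tupDiam z := by linarith [(abs_sub_le_iff.mp hdiam).1]
  rw [normMap_eq, normMap_eq]
  calc _ ≤ 2 * (2 * γ) / tupDiam z :=
        norm_inv_smul_sub_inv_smul_le (by linarith) (by linarith)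
          (norm_sub_tupMean_le_tupDiam x k) (norm_sub_tupMean_sub_sub_tupMean_le hxz k) hdiam
    _ = 4 * γ / tupDiam z := by ring
    _ ≤ 4 * γ / (tupDiam x - 2 * γ) := by
        gcongr
        linarith

/-- Lemma `lmm:perturb:norm`, perturbed normalization.
Let `𝐱, 𝐳 ∈ (ℝ^d)^N` with `γ := max_k ‖x_k − z_k‖ < (1/2)·diam(𝐱)`.  Then
`max_k ‖η_𝐱(x_k) − η_𝐳(z_k)‖ ≤ 4γ/(diam(𝐱) − 2γ)`. -/
theorem stmt12 (d N : ℕ) (hN : 0 < N)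
    (x z : Fin N → EuclideanSpace ℝ (Fin d)) (γ : ℝ)
    (hγdef : γ = ⨆ k, ‖x k - z k‖)
    (hγ : γ < (1 / 2) * tupDiam x) :
    ∀ k, ‖normMap x (x k) - normMap z (z k)‖ ≤
      4 * γ / (tupDiam x - 2 * γ) :=
  stmt12_general d N x z γ hγdef hγ
end

section
/- Let d, ℓ, n ∈ ℕ, T, h > 0, s ∈ {0, …, ℓ}, and let 𝐯 be s unit directions in ℝ^d. Let x₁, …, x_n ∈ [0,T]^d, let K : [0,∞) → ℝ be a kernel, and set ψ(z) := ((α!)^{-1} z^α)_{|α|≤ℓ} ∈ ℝ^N with N = binom(ℓ+d,d). For x ∈ ℝ^d define B(x) := (T^d/(n h^d)) Σ_{i=1}^n ψ((x_i−x)/h) ψ((x_i−x)/h)ᵀ K(‖x_i−x‖/h) and the weights w_i(x) := (T^d/(n h^{d+s})) D_𝐯ψ(0)ᵀ B(x)^{-1} ψ((x_i−x)/h) K(‖x_i−x‖/h). If the smallest eigenvalue of B(x) is positive, then for every polynomial q : ℝ^d → ℝ of degree at most ℓ: Σ_{i=1}^n w_i(x) q(x_i) = D_𝐯 q(x), the s-th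 directional derivative of q at x in directions 𝐯. -/
/-- Index type for monomials `z^α` of total degree at most `ℓ` in `d` variables;
its cardinality is `N = binom(ℓ+d,d)`. -/
abbrev MonIdx (d ℓ : ℕ) := {α : Fin d → Fin (ℓ + 1) // ∑ i, (α i : ℕ) ≤ ℓ}

/-- The vector `ψ(z) = ((α!)⁻¹ z^α)_{|α|≤ℓ} ∈ ℝ^N`. -/
noncomputable def psiVec (d ℓ : ℕ) (z : EuclideanSpace ℝ (Fin d)) :
    MonIdx d ℓ → ℝ :=
  fun α => ((∏ i, Nat.factorial (α.1 i) : ℕ) : ℝ)⁻¹ * ∏ i, z i ^ (α.1 i : ℕ)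

/-- The local polynomial design matrix
`B(x) = (T^d/(n h^d)) Σᵢ ψ((xᵢ−x)/h) ψ((xᵢ−x)/h)ᵀ K(‖xᵢ−x‖/h)`. -/
noncomputable def Bmat (d ℓ n : ℕ) (T h : ℝ) (K : ℝ → ℝ)
    (X : Fin n → EuclideanSpace ℝ (Fin d)) (x : EuclideanSpace ℝ (Fin d)) :
    Matrix (MonIdx d ℓ) (MonIdx d ℓ) ℝ :=
  (T ^ d / (n * h ^ d)) •
    ∑ i, K (‖X i - x‖ / h) •
      Matrix.vecMulVec (psiVec d ℓ (h⁻¹ • (X i - x))) (psiVec d ℓ (h⁻¹ • (X i - x)))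

/-- The vector `D_𝐯 ψ(0)`: the `s`-th iterated directional derivative of `ψ` at `0`
in the directions `𝐯`, taken entrywise. -/
noncomputable def DpsiVec (d ℓ s : ℕ) (v : Fin s → EuclideanSpace ℝ (Fin d)) :
    MonIdx d ℓ → ℝ :=
  fun α => iteratedFDeriv ℝ s (fun z => psiVec d ℓ z α) 0 v

/-- The local polynomial weights
`wᵢ(x) = (T^d/(n h^{d+s})) D_𝐯ψ(0)ᵀ B(x)⁻¹ ψ((xᵢ−x)/h) K(‖xᵢ−x‖/h)`. -/
noncomputable def lpWeight (d ℓ n s : ℕ) (T h : ℝ) (K : ℝ → ℝ)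
    (v : Fin s → EuclideanSpace ℝ (Fin d))
    (X : Fin n → EuclideanSpace ℝ (Fin d)) (x : EuclideanSpace ℝ (Fin d))
    (i : Fin n) : ℝ :=
  (T ^ d / (n * h ^ (d + s))) *
    dotProduct (DpsiVec d ℓ s v)
      ((Bmat d ℓ n T h K X x)⁻¹.mulVec (psiVec d ℓ (h⁻¹ • (X i - x)))) *
    K (‖X i - x‖ / h)

/-!
Write `zᵢ = (xᵢ - x)/h`. The polynomial `z ↦ q(x + h z)` has degree at most `ℓ`, so it equals
`ψ(z) ⬝ c` for some `c`; hence `q(xᵢ) = ψ(zᵢ) ⬝ c` and `D_𝐯ψ(0) ⬝ c = hˢ D_𝐯 q(x)`. Since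
`B(x) c = (T^d/(n h^d)) Σᵢ K(‖xᵢ - x‖/h) (ψ(zᵢ) ⬝ c) ψ(zᵢ)`, substituting these into the weights
gives `Σᵢ wᵢ(x) q(xᵢ) = h⁻ˢ D_𝐯ψ(0) ⬝ B(x)⁻¹ B(x) c = h⁻ˢ D_𝐯ψ(0) ⬝ c = D_𝐯 q(x)`.
-/

open MvPolynomial Matrix

theorem MvPolynomial.totalDegree_bind₁_le_of_le_one {σ τ R : Type*} [CommSemiring R]
    {g : σ → MvPolynomial τ R} (hg : ∀ i, (g i).totalDegree ≤ 1) (p : MvPolynomial σ R) :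
    (bind₁ g p).totalDegree ≤ p.totalDegree := by
  conv_lhs => rw [p.as_sum, map_sum]
  refine totalDegree_finsetSum_le fun m hm => ?_
  rw [bind₁_monomial]
  refine (totalDegree_mul _ _).trans ?_
  rw [totalDegree_C, zero_add]
  refine (totalDegree_finsetProd _ _).trans ?_
  calc ∑ i ∈ m.support, (g i ^ m i).totalDegree
      ≤ ∑ i ∈ m.support, m i :=
        Finset.sum_le_sum fun i _ =>
          (totalDegree_pow _ _).trans (by simpa using Nat.mul_le_mul_left (m i) (hg i))
    _ ≤ p.totalDegree := le_totalDegree hm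

theorem MvPolynomial.contDiff_eval_euclidean {ι : Type*} [Fintype ι] (p : MvPolynomial ι ℝ)
    {n : WithTop ℕ∞} : ContDiff ℝ n fun y : EuclideanSpace ℝ ι => eval (fun j => y j) p :=
  (AnalyticOnNhd.eval_continuousLinearMap'
    (fun j => (EuclideanSpace.proj j : EuclideanSpace ℝ ι →L[ℝ] ℝ)) p).contDiff

section IteratedFDeriv

variable {𝕜 E F : Type*} [NontriviallyNormedField 𝕜] [NormedAddCommGroup E] [NormedSpace 𝕜 E]
  [NormedAddCommGroup F] [NormedSpace 𝕜 F]

theorem iteratedFDeriv_comp_affine_apply {f : E → F} {n : ℕ} (hf : ContDiff 𝕜 n f) (a : E)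
    (c : 𝕜) (z : E) (v : Fin n → E) :
    iteratedFDeriv 𝕜 n (fun z => f (a + c • z)) z v
      = c ^ n • iteratedFDeriv 𝕜 n f (a + c • z) v := by
  have hcomp :
      (fun z => f (a + c • z)) = (fun y => f (a + y)) ∘ (c • ContinuousLinearMap.id 𝕜 E) := rfl
  rw [hcomp, (c • ContinuousLinearMap.id 𝕜 E).iteratedFDeriv_comp_right
    (f := fun y => f (a + y)) (hf.comp (contDiff_const.add contDiff_id)) z le_rfl,
    iteratedFDeriv_comp_add_left]
  simp [ContinuousMultilinearMap.compContinuousLinearMap_apply,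
    ContinuousMultilinearMap.map_smul_univ]

theorem iteratedFDeriv_dotProduct_const {ι : Type*} [Fintype ι] {f : E → ι → 𝕜} {n : ℕ}
    (hf : ∀ α, ContDiff 𝕜 n (f · α)) (c : ι → 𝕜) (x : E) (v : Fin n → E) :
    iteratedFDeriv 𝕜 n (fun z => f z ⬝ᵥ c) x v
      = (fun α => iteratedFDeriv 𝕜 n (f · α) x v) ⬝ᵥ c := by
  have hsum : (fun z => f z ⬝ᵥ c) = fun z => ∑ α, c α • f z α := by
    ext z; simp [dotProduct, mul_comm]
  rw [hsum, iteratedFDeriv_fun_sum_apply fun α _ => ((hf α).const_smul (c α)).contDiffAt,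
    _root_.sum_apply]
  refine Finset.sum_congr rfl fun α _ => ?_
  rw [iteratedFDeriv_const_smul_apply' (hf α).contDiffAt, _root_.smul_apply,
    smul_eq_mul, mul_comm]

end IteratedFDeriv

section LinearAlgebra

variable {K ι m : Type*} [Field K] [Fintype ι] [Fintype m] [DecidableEq m]

theorem sum_dotProduct_inv_gram_mulVec (a : K) (k : ι → K) (ψ : ι → m → K)
    (B : Matrix m m K) (hBdef : B = a • ∑ i, k i • vecMulVec (ψ i) (ψ i)) (hB : IsUnit B.det)
    (D c : m → K) :
    ∑ i, a * (D ⬝ᵥ B⁻¹ *ᵥ ψ i) * k i * (ψ i ⬝ᵥ c) = D ⬝ᵥ c := by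
  have hBc : B *ᵥ c = ∑ i, (a * k i * (ψ i ⬝ᵥ c)) • ψ i := by
    simp only [hBdef, smul_mulVec, sum_mulVec, vecMulVec_mulVec, op_smul_eq_smul, smul_smul,
      Finset.smul_sum, mul_assoc]
  calc ∑ i, a * (D ⬝ᵥ B⁻¹ *ᵥ ψ i) * k i * (ψ i ⬝ᵥ c)
      = D ⬝ᵥ B⁻¹ *ᵥ (B *ᵥ c) := by
        simp only [hBc, mulVec_sum, dotProduct_sum, mulVec_smul, dotProduct_smul, smul_eq_mul]
        exact Finset.sum_congr rfl fun i _ => by ring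
    _ = D ⬝ᵥ c := by rw [mulVec_mulVec, nonsing_inv_mul _ hB, one_mulVec]

end LinearAlgebra

section Monomials

variable {d ℓ : ℕ}

noncomputable def MonIdx.toFinsupp (α : MonIdx d ℓ) : Fin d →₀ ℕ :=
  Finsupp.equivFunOnFinite.symm fun i => α.1 i

theorem MonIdx.toFinsupp_injective : Function.Injective (MonIdx.toFinsupp (d := d) (ℓ := ℓ)) :=
  fun _ _ hαβ => Subtype.ext <| funext fun i => Fin.ext (DFunLike.congr_fun hαβ i)

theorem MvPolynomial.support_subset_image_toFinsupp {p : MvPolynomial (Fin d) ℝ}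
    (hp : p.totalDegree ≤ ℓ) :
    p.support ⊆ Finset.univ.image (MonIdx.toFinsupp (d := d) (ℓ := ℓ)) := by
  intro m hm
  have hdeg : ∑ i, m i ≤ ℓ :=
    (Finsupp.sum_fintype m (fun _ e => e) fun _ => rfl) ▸ (le_totalDegree hm).trans hp
  have hlt : ∀ i, m i < ℓ + 1 := fun i =>
    Nat.lt_succ_of_le <| (Finset.single_le_sum (fun j _ => Nat.zero_le (m j))
      (Finset.mem_univ i)).trans hdeg
  exact Finset.mem_image.mpr ⟨⟨fun i => ⟨m i, hlt i⟩, by simpa using hdeg⟩, Finset.mem_univ _,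
    Finsupp.ext fun i => rfl⟩

noncomputable def psiCoeff (ℓ : ℕ) (p : MvPolynomial (Fin d) ℝ) : MonIdx d ℓ → ℝ :=
  fun α => ((∏ i, (α.1 i : ℕ).factorial : ℕ) : ℝ) * coeff α.toFinsupp p

theorem psiVec_dotProduct_psiCoeff {p : MvPolynomial (Fin d) ℝ} (hp : p.totalDegree ≤ ℓ)
    (z : EuclideanSpace ℝ (Fin d)) :
    psiVec d ℓ z ⬝ᵥ psiCoeff ℓ p = eval (fun j => z j) p := by
  classical
  have hterm : ∀ α : MonIdx d ℓ, psiVec d ℓ z α * psiCoeff ℓ p α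
      = coeff α.toFinsupp p * ∏ i, z i ^ α.toFinsupp i := by
    intro α
    have hfact : ((∏ i, (α.1 i : ℕ).factorial : ℕ) : ℝ) ≠ 0 := by positivity
    simp only [psiVec, psiCoeff]
    field_simp
    exact mul_comm _ _
  rw [eval_eq', dotProduct, Finset.sum_congr rfl fun α _ => hterm α,
    ← Finset.sum_image (f := fun m => coeff m p * ∏ i, z i ^ m i)
      fun _ _ _ _ h => MonIdx.toFinsupp_injective h]
  refine (Finset.sum_subset (support_subset_image_toFinsupp hp) fun m _ hm => ?_).symm
  rw [notMem_support_iff.mp hm, zero_mul]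

theorem exists_psiVec_dotProduct_eq_eval_affine {q : MvPolynomial (Fin d) ℝ}
    (hq : q.totalDegree ≤ ℓ) (x : EuclideanSpace ℝ (Fin d)) (h : ℝ) :
    ∃ c : MonIdx d ℓ → ℝ, ∀ z, psiVec d ℓ z ⬝ᵥ c = eval (fun j => (x + h • z) j) q := by
  set Q := bind₁ (fun j => C (x j) + C h * X j) q
  have hQ : Q.totalDegree ≤ ℓ := by
    refine (totalDegree_bind₁_le_of_le_one (fun j => ?_) q).trans hq
    exact (totalDegree_add _ _).trans (max_le (by simp) ((totalDegree_mul _ _).trans (by simp)))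
  refine ⟨psiCoeff ℓ Q, fun z => ?_⟩
  rw [psiVec_dotProduct_psiCoeff hQ]
  change eval₂Hom (RingHom.id ℝ) _ (bind₁ _ q) = _
  rw [eval₂Hom_bind₁]
  congr 2
  funext j
  simp

theorem contDiff_psiVec_apply (α : MonIdx d ℓ) {n : WithTop ℕ∞} :
    ContDiff ℝ n fun z => psiVec d ℓ z α := by
  unfold psiVec
  fun_prop

theorem DpsiVec_dotProduct (s : ℕ) (v : Fin s → EuclideanSpace ℝ (Fin d)) (c : MonIdx d ℓ → ℝ) :
    DpsiVec d ℓ s v ⬝ᵥ c = iteratedFDeriv ℝ s (fun z => psiVec d ℓ z ⬝ᵥ c) 0 v :=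
  (iteratedFDeriv_dotProduct_const (fun α => contDiff_psiVec_apply α) c 0 v).symm

end Monomials

theorem stmt14_general (d ℓ n s : ℕ)
    (T h : ℝ) (hh : 0 < h)
    (v : Fin s → EuclideanSpace ℝ (Fin d))
    (X : Fin n → EuclideanSpace ℝ (Fin d))
    (K : ℝ → ℝ) (x : EuclideanSpace ℝ (Fin d))
    (hB : (Bmat d ℓ n T h K X x).PosDef)
    (q : MvPolynomial (Fin d) ℝ) (hq : q.totalDegree ≤ ℓ) :
    ∑ i, lpWeight d ℓ n s T h K v X x i *
        MvPolynomial.eval (fun j => X i j) q =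
      iteratedFDeriv ℝ s (fun y => MvPolynomial.eval (fun j => y j) q) x v := by
  obtain ⟨c, hc⟩ := exists_psiVec_dotProduct_eq_eval_affine hq x h
  have hsample (i : Fin n) : eval (fun j => X i j) q = psiVec d ℓ (h⁻¹ • (X i - x)) ⬝ᵥ c := by
    rw [hc, smul_smul, mul_inv_cancel₀ hh.ne', one_smul, add_sub_cancel]
  have hderiv : DpsiVec d ℓ s v ⬝ᵥ c
      = h ^ s * iteratedFDeriv ℝ s (fun y => eval (fun j => y j) q) x v := by
    have hscale := iteratedFDeriv_comp_affine_apply (contDiff_eval_euclidean q) x h 0 v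
    rw [smul_zero, add_zero, smul_eq_mul] at hscale
    rw [DpsiVec_dotProduct, ← hscale]
    simp only [hc]
  have hreproduce := sum_dotProduct_inv_gram_mulVec (T ^ d / (n * h ^ d))
    (fun i => K (‖X i - x‖ / h)) (fun i => psiVec d ℓ (h⁻¹ • (X i - x)))
    (Bmat d ℓ n T h K X x) rfl ((isUnit_iff_isUnit_det _).mp hB.isUnit) (DpsiVec d ℓ s v) c
  calc ∑ i, lpWeight d ℓ n s T h K v X x i * eval (fun j => X i j) q
      = (∑ i, T ^ d / (n * h ^ d) * (DpsiVec d ℓ s v ⬝ᵥ (Bmat d ℓ n T h K X x)⁻¹ *ᵥ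
          psiVec d ℓ (h⁻¹ • (X i - x))) * K (‖X i - x‖ / h) *
          (psiVec d ℓ (h⁻¹ • (X i - x)) ⬝ᵥ c)) / h ^ s := by
        simp only [lpWeight, hsample, Finset.sum_div]
        refine Finset.sum_congr rfl fun i _ => ?_
        rw [pow_add]
        ring
    _ = iteratedFDeriv ℝ s (fun y => eval (fun j => y j) q) x v := by
        rw [hreproduce, hderiv, mul_div_cancel_left₀ _ (pow_ne_zero s hh.ne')]

/-- Lemma `lmm:reproduction`, polynomial reproduction.
If the design matrix `B(x)` of the local polynomial estimator is positive definite
(equivalently, symmetric with positive smallest eigenvalue), then for every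
polynomial `q : ℝ^d → ℝ` of degree at most `ℓ`,
`Σᵢ wᵢ(x) q(xᵢ) = D_𝐯 q(x)`, the `s`-th directional derivative of `q` at `x` in the
unit directions `𝐯`. -/
theorem stmt14 (d ℓ n s : ℕ) (hd : 1 ≤ d) (hℓ : 1 ≤ ℓ) (hn : 1 ≤ n) (hs : s ≤ ℓ)
    (T h : ℝ) (hT : 0 < T) (hh : 0 < h)
    (v : Fin s → EuclideanSpace ℝ (Fin d)) (hv : ∀ i, ‖v i‖ = 1)
    (X : Fin n → EuclideanSpace ℝ (Fin d))
    (hX : ∀ i j, X i j ∈ Set.Icc (0 : ℝ) T)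
    (K : ℝ → ℝ) (x : EuclideanSpace ℝ (Fin d))
    (hB : (Bmat d ℓ n T h K X x).PosDef)
    (q : MvPolynomial (Fin d) ℝ) (hq : q.totalDegree ≤ ℓ) :
    ∑ i, lpWeight d ℓ n s T h K v X x i *
        MvPolynomial.eval (fun j => X i j) q =
      iteratedFDeriv ℝ s (fun y => MvPolynomial.eval (fun j => y j) q) x v :=
  stmt14_general d ℓ n s T h hh v X K x hB q hq
end

section
/- Let d ∈ ℕ, L₁ > 0, T > 0, δ ≥ 0. Let f⋆ : ℝ^d → ℝ^d be L₁-Lipschitz, x₁ ∈ ℝ^d, and set u⋆ := U(f⋆, x₁, ·), so u̇⋆(t) = f⋆(u⋆(t)). Let û, û̇ : [0,T] → ℝ^d be any continuous functions, and for x ∈ ℝ^d let t_NN(û, T, x) be a minimizer over t ∈ [0,T] of ‖û(t) − x‖, and define f̂(x) := û̇(t_NN(û, T, x)). Then for every x₀ with dist(x₀, u⋆([0,T])) ≤ δ: ‖f̂(x₀) − f⋆(x₀)‖ ≤ L₁·( δ + 2·sup_{t∈[0,T]} ‖û(t) − u⋆(t)‖ ) + sup_{t∈[0,T]} ‖û̇(t)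 − u̇⋆(t)‖. -/
/-!
Let `t₁` be a time at which `u⋆(t₁)` is a point of the trajectory nearest to `x₀`, and let
`τ = t_NN(û, T, x₀)`. Since `τ` minimises `‖û(·) − x₀‖`, the triangle inequality through `û(τ)`
and `û(t₁)` gives `‖u⋆(τ) − x₀‖ ≤ δ + 2 sup ‖û − u⋆‖`. Then
`‖û̇(τ) − f⋆(x₀)‖ ≤ ‖û̇(τ) − f⋆(u⋆(τ))‖ + ‖f⋆(u⋆(τ)) − f⋆(x₀)‖`, and the Lipschitz bound on the
second term concludes.
-/

open Set Metric

theorem ContinuousOn.le_iSup_of_isCompact {α : Type*} [TopologicalSpace α] {s : Set α}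
    (hs : IsCompact s) {g : α → ℝ} (hg : ContinuousOn g s) {t : α} (ht : t ∈ s) :
    g t ≤ ⨆ x : s, g x :=
  le_ciSup (f := fun x : s => g x) (image_eq_range g s ▸ hs.bddAbove_image hg) ⟨t, ht⟩

theorem IsCompact.exists_mem_dist_le_of_infDist_image_le {α E : Type*} [TopologicalSpace α]
    [PseudoMetricSpace E] {s : Set α} (hs : IsCompact s) (hne : s.Nonempty) {v : α → E}
    (hv : ContinuousOn v s) {x : E} {δ : ℝ} (hx : infDist x (v '' s) ≤ δ) :
    ∃ t ∈ s, dist x (v t) ≤ δ := by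
  obtain ⟨_, ⟨t, ht, rfl⟩, hdist⟩ := (hs.image_of_continuousOn hv).exists_infDist_eq_dist
    (hne.image v) x
  exact ⟨t, ht, hdist ▸ hx⟩

theorem norm_sub_le_of_isNearest {α E : Type*} [SeminormedAddCommGroup E] {s : Set α}
    {u v : α → E} {ε δ : ℝ} (huv : ∀ t ∈ s, ‖u t - v t‖ ≤ ε) {x : E} {τ t : α}
    (hτ : τ ∈ s) (hmin : ∀ t' ∈ s, ‖u τ - x‖ ≤ ‖u t' - x‖) (ht : t ∈ s) (hxt : ‖x - v t‖ ≤ δ) :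
    ‖v τ - x‖ ≤ δ + 2 * ε :=
  calc ‖v τ - x‖
      ≤ ‖u τ - v τ‖ + ‖u τ - x‖ := by
        rw [← norm_neg (u τ - v τ), neg_sub]; exact norm_sub_le_norm_sub_add_norm_sub _ _ _
    _ ≤ ε + ‖u t - x‖ := add_le_add (huv τ hτ) (hmin t ht)
    _ ≤ ε + (‖u t - v t‖ + ‖x - v t‖) := by
        gcongr; rw [norm_sub_rev x]; exact norm_sub_le_norm_sub_add_norm_sub _ _ _
    _ ≤ δ + 2 * ε := by linarith [huv t ht]

theorem stmt17_general (d : ℕ) (L₁ T δ : ℝ) (hL₁ : 0 < L₁)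
    (fstar : EuclideanSpace ℝ (Fin d) → EuclideanSpace ℝ (Fin d))
    (hf : ∀ a b, ‖fstar a - fstar b‖ ≤ L₁ * ‖a - b‖)
    (ustar : ℝ → EuclideanSpace ℝ (Fin d))
    (hu : ∀ t, HasDerivAt ustar (fstar (ustar t)) t)
    (uhat udot : ℝ → EuclideanSpace ℝ (Fin d))
    (huc : ContinuousOn uhat (Set.Icc 0 T))
    (hudc : ContinuousOn udot (Set.Icc 0 T))
    (τ : EuclideanSpace ℝ (Fin d) → ℝ)
    (hτmem : ∀ x, τ x ∈ Set.Icc (0 : ℝ) T)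
    (hτmin : ∀ x, ∀ t ∈ Set.Icc (0 : ℝ) T, ‖uhat (τ x) - x‖ ≤ ‖uhat t - x‖)
    (x₀ : EuclideanSpace ℝ (Fin d))
    (hx₀ : Metric.infDist x₀ (ustar '' Set.Icc 0 T) ≤ δ) :
    ‖udot (τ x₀) - fstar x₀‖ ≤
      L₁ * (δ + 2 * ⨆ t : Set.Icc (0 : ℝ) T, ‖uhat ↑t - ustar ↑t‖) +
        ⨆ t : Set.Icc (0 : ℝ) T, ‖udot ↑t - fstar (ustar ↑t)‖ := by
  have hustar : Continuous ustar := continuous_iff_continuousAt.mpr fun t => (hu t).continuousAt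
  have hfstar : Continuous fstar :=
    (LipschitzWith.of_dist_le_mul (K := ⟨L₁, hL₁.le⟩) fun a b => by
      rw [dist_eq_norm, dist_eq_norm]; exact hf a b).continuous
  obtain ⟨t₁, ht₁, hxt₁⟩ := isCompact_Icc.exists_mem_dist_le_of_infDist_image_le
    ⟨τ x₀, hτmem x₀⟩ hustar.continuousOn hx₀
  have hnear : ‖ustar (τ x₀) - x₀‖ ≤ δ + 2 * ⨆ t : Set.Icc (0 : ℝ) T, ‖uhat ↑t - ustar ↑t‖ :=
    norm_sub_le_of_isNearest
      (fun t ht => (huc.sub hustar.continuousOn).norm.le_iSup_of_isCompact isCompact_Icc ht)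
      (hτmem x₀) (hτmin x₀) ht₁ (dist_eq_norm x₀ _ ▸ hxt₁)
  have hdot : ‖udot (τ x₀) - fstar (ustar (τ x₀))‖ ≤
      ⨆ t : Set.Icc (0 : ℝ) T, ‖udot ↑t - fstar (ustar ↑t)‖ :=
    (hudc.sub (hfstar.comp hustar).continuousOn).norm.le_iSup_of_isCompact isCompact_Icc
      (hτmem x₀)
  calc ‖udot (τ x₀) - fstar x₀‖
      ≤ ‖udot (τ x₀) - fstar (ustar (τ x₀))‖ + ‖fstar (ustar (τ x₀)) - fstar x₀‖ :=
        norm_sub_le_norm_sub_add_norm_sub _ _ _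
    _ ≤ _ + L₁ * ‖ustar (τ x₀) - x₀‖ := by gcongr; exact hf _ _
    _ ≤ _ := by linarith [mul_le_mul_of_nonneg_left hnear hL₁.le]

/-- Lemma `lmm:nnbound`, nearest-neighbor error bound.
Let `f⋆ : ℝ^d → ℝ^d` be `L₁`-Lipschitz, let `u⋆` solve `u̇⋆ = f⋆(u⋆)` with
`u⋆ 0 = x₁`, let `û`, `û̇` be continuous (on `[0,T]`) functions, let
`t_NN(û, T, x)` be a minimizer over `[0,T]` of `t ↦ ‖û(t) − x‖`, and set
`f̂(x) := û̇(t_NN(û, T, x))`.  Then for every `x₀` with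
`dist(x₀, u⋆([0,T])) ≤ δ`:
`‖f̂(x₀) − f⋆(x₀)‖ ≤ L₁·(δ + 2·sup_{t∈[0,T]} ‖û(t) − u⋆(t)‖)
+ sup_{t∈[0,T]} ‖û̇(t) − u̇⋆(t)‖`  (note `u̇⋆(t) = f⋆(u⋆(t))`). -/
theorem stmt17 (d : ℕ) (L₁ T δ : ℝ) (hL₁ : 0 < L₁) (hT : 0 < T) (hδ : 0 ≤ δ)
    (fstar : EuclideanSpace ℝ (Fin d) → EuclideanSpace ℝ (Fin d))
    (hf : ∀ a b, ‖fstar a - fstar b‖ ≤ L₁ * ‖a - b‖)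
    (x₁ : EuclideanSpace ℝ (Fin d)) (ustar : ℝ → EuclideanSpace ℝ (Fin d))
    (hu0 : ustar 0 = x₁)
    (hu : ∀ t, HasDerivAt ustar (fstar (ustar t)) t)
    (uhat udot : ℝ → EuclideanSpace ℝ (Fin d))
    (huc : ContinuousOn uhat (Set.Icc 0 T))
    (hudc : ContinuousOn udot (Set.Icc 0 T))
    (τ : EuclideanSpace ℝ (Fin d) → ℝ)
    (hτmem : ∀ x, τ x ∈ Set.Icc (0 : ℝ) T)
    (hτmin : ∀ x, ∀ t ∈ Set.Icc (0 : ℝ) T, ‖uhat (τ x) - x‖ ≤ ‖uhat t - x‖)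
    (x₀ : EuclideanSpace ℝ (Fin d))
    (hx₀ : Metric.infDist x₀ (ustar '' Set.Icc 0 T) ≤ δ) :
    ‖udot (τ x₀) - fstar x₀‖ ≤
      L₁ * (δ + 2 * ⨆ t : Set.Icc (0 : ℝ) T, ‖uhat ↑t - ustar ↑t‖) +
        ⨆ t : Set.Icc (0 : ℝ) T, ‖udot ↑t - fstar (ustar ↑t)‖ :=
  stmt17_general d L₁ T δ hL₁ fstar hf ustar hu uhat udot huc hudc τ hτmem hτmin x₀ hx₀
end
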